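/- Let f : ℝⁿ → ℝⁿ, g : ℝⁿ → ℝ^{n×m}, and u : ℝⁿ → ℝ^m be continuous, let p > 0 and ψ₁, …, ψ_p : ℝⁿ → ℝⁿ be continuous, and define D_A(x′) = co{ψ₁(x′), …, ψ_p(x′)} for all x′ ∈ ℝⁿ. Let h : ℝⁿ → ℝ be continuously differentiable and let α : ℝ → ℝ be a locally Lipschitz extended class-K function. Assume that for every x′ ∈ ℝⁿ, ∇h(x′)ᵀ( f(x′) + g(x′)u(x′) ) ≥ −α(h(x′)) − min_{i ∈ {1,…,p}} ∇h(x′)ᵀψᵢ(x′). Then for every T > 0 and every differentiable trajectory x : [0, T] → ℝⁿ satisfying ẋ(t) ∈ f(x(t)) + g(x(t))u(x(t)) + D_A(x(t)) for all t ∈ [0, T], the condition h(x(0)) ≥ 0 implies h(x(t)) ≥ 0 for all t ∈ [0, T]. -/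

import Mathlib

open scoped Matrix

open Set

/-!
Along a trajectory the derivative of `y = h ∘ x` is `∇h · (f + g u) + ∇h · d` with `d` in the
convex hull of the `ψᵢ`; a linear functional attains its minimum over a convex hull at a vertex,
so the barrier condition gives `ẏ ≥ -α(y)`, which is positive wherever `y < 0`. A real function
whose derivative is positive wherever it is negative cannot become negative: on the last stretch
`(s, t]` where it is negative, the mean value theorem would produce a point with negative
derivative.
-/

theorem ConcaveOn.ciInf_le_of_mem_convexHull {E ι : Type*} [AddCommGroup E]
    [Module ℝ E] [Finite ι] {f : E → ℝ} {v : ι → E}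
    (hf : ConcaveOn ℝ (convexHull ℝ (range v)) f) {d : E}
    (hd : d ∈ convexHull ℝ (range v)) : ⨅ i, f (v i) ≤ f d := by
  obtain ⟨_, ⟨i, rfl⟩, hi⟩ := hf.exists_le_of_mem_convexHull (subset_convexHull ℝ _) hd
  exact (ciInf_le (Finite.bddBelow_range _) i).trans hi

theorem ContinuousOn.exists_nonneg_forall_Ioc_neg {y : ℝ → ℝ} {a b : ℝ}
    (hy : ContinuousOn y (Icc a b)) (hab : a ≤ b) (ha : 0 ≤ y a) :
    ∃ s ∈ Icc a b, 0 ≤ y s ∧ ∀ t ∈ Ioc s b, y t < 0 := by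
  have hclosed : IsClosed (Icc a b ∩ y ⁻¹' Ici 0) :=
    hy.preimage_isClosed_of_isClosed isClosed_Icc isClosed_Ici
  obtain ⟨s, ⟨hs, hys⟩, hmax⟩ := (isCompact_Icc.of_isClosed_subset hclosed
    inter_subset_left).exists_isGreatest ⟨a, ⟨left_mem_Icc.2 hab, ha⟩⟩
  refine ⟨s, hs, hys, fun t ht => ?_⟩
  by_contra! hyt
  exact (hmax ⟨⟨hs.1.trans ht.1.le, ht.2⟩, hyt⟩).not_gt ht.1

theorem nonneg_of_hasDerivAt_pos_of_neg {y y' : ℝ → ℝ} {a b : ℝ}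
    (hc : ContinuousOn y (Icc a b)) (hy : ∀ t ∈ Ioo a b, HasDerivAt y (y' t) t)
    (hpos : ∀ t ∈ Ioo a b, y t < 0 → 0 < y' t) (ha : 0 ≤ y a) :
    ∀ t ∈ Icc a b, 0 ≤ y t := by
  intro t ht
  by_contra! hyt
  obtain ⟨s, hs, hys, hneg⟩ :=
    (hc.mono (Icc_subset_Icc_right ht.2)).exists_nonneg_forall_Ioc_neg ht.1 ha
  have hst : s < t := hs.2.lt_of_ne (by rintro rfl; linarith)
  have hsub : Ioo s t ⊆ Ioo a b := Ioo_subset_Ioo hs.1 ht.2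
  obtain ⟨c, hct, hslope⟩ := exists_hasDerivAt_eq_slope y y' hst
    (hc.mono (Icc_subset_Icc hs.1 ht.2)) fun r hr => hy r (hsub hr)
  have hderiv_neg : y' c < 0 := hslope ▸ div_neg_of_neg_of_pos (by linarith) (by linarith)
  exact hderiv_neg.not_gt (hpos c (hsub hct) (hneg c (Ioo_subset_Ioc_self hct)))

theorem stmt12_general (n m p : ℕ)
    (f : (Fin n → ℝ) → (Fin n → ℝ))
    (g : (Fin n → ℝ) → Matrix (Fin n) (Fin m) ℝ)
    (u : (Fin n → ℝ) → (Fin m → ℝ))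
    (ψ : Fin p → (Fin n → ℝ) → (Fin n → ℝ))
    (h : (Fin n → ℝ) → ℝ) (hh : ContDiff ℝ 1 h)
    (α : ℝ → ℝ) (hαm : StrictMono α) (hα0 : α 0 = 0)
    (hbar : ∀ x' : Fin n → ℝ,
      -α (h x') - (⨅ i : Fin p, fderiv ℝ h x' (ψ i x')) ≤
        fderiv ℝ h x' (f x' + g x' *ᵥ u x'))
    (T : ℝ) (x x' : ℝ → (Fin n → ℝ))
    (hderiv : ∀ t ∈ Set.Icc (0 : ℝ) T, HasDerivAt x (x' t) t)
    (hincl : ∀ t ∈ Set.Icc (0 : ℝ) T,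
      ∃ d ∈ convexHull ℝ (Set.range fun i => ψ i (x t)),
        x' t = f (x t) + g (x t) *ᵥ u (x t) + d)
    (hx0 : 0 ≤ h (x 0)) :
    ∀ t ∈ Set.Icc (0 : ℝ) T, 0 ≤ h (x t) := by
  have hdiff : ∀ t ∈ Icc 0 T, HasDerivAt (h ∘ x) (fderiv ℝ h (x t) (x' t)) t := fun t ht =>
    (hh.differentiable one_ne_zero (x t)).hasFDerivAt.comp_hasDerivAt t (hderiv t ht)
  refine nonneg_of_hasDerivAt_pos_of_neg
    (fun t ht => (hdiff t ht).continuousAt.continuousWithinAt)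
    (fun t ht => hdiff t (Ioo_subset_Icc_self ht)) (fun t ht hneg => ?_) hx0
  obtain ⟨d, hd, hx't⟩ := hincl t (Ioo_subset_Icc_self ht)
  have hvertex : ⨅ i, fderiv ℝ h (x t) (ψ i (x t)) ≤ fderiv ℝ h (x t) d :=
    ((fderiv ℝ h (x t)).toLinearMap.concaveOn
      (convex_convexHull ℝ _)).ciInf_le_of_mem_convexHull hd
  have hα_neg : α (h (x t)) < 0 := hα0 ▸ hαm hneg
  rw [hx't, map_add]
  linarith [hbar (x t)]

/-- Robust CBFs for additive disturbances (Theorem 2 of the paper,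
specialized to differentiable solutions): if
`∇h(x')ᵀ(f(x') + g(x')u(x')) ≥ -α(h(x')) - minᵢ ∇h(x')ᵀψᵢ(x')` for all `x'`, then along
every differentiable solution of `ẋ ∈ f(x) + g(x)u(x) + co{ψ₁(x),…,ψ_p(x)}` on `[0, T]`,
`h(x(0)) ≥ 0` implies `h(x(t)) ≥ 0` on `[0, T]`. -/
theorem stmt12 (n m p : ℕ) (hp : 0 < p)
    (f : (Fin n → ℝ) → (Fin n → ℝ)) (hf : Continuous f)
    (g : (Fin n → ℝ) → Matrix (Fin n) (Fin m) ℝ) (hg : Continuous g)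
    (u : (Fin n → ℝ) → (Fin m → ℝ)) (hu : Continuous u)
    (ψ : Fin p → (Fin n → ℝ) → (Fin n → ℝ)) (hψ : ∀ i, Continuous (ψ i))
    (h : (Fin n → ℝ) → ℝ) (hh : ContDiff ℝ 1 h)
    (α : ℝ → ℝ) (hαc : Continuous α) (hαm : StrictMono α) (hα0 : α 0 = 0)
    (hαl : LocallyLipschitz α)
    (hbar : ∀ x' : Fin n → ℝ,
      -α (h x') - (⨅ i : Fin p, fderiv ℝ h x' (ψ i x')) ≤
        fderiv ℝ h x' (f x' + g x' *ᵥ u x'))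
    (T : ℝ) (hT : 0 < T) (x x' : ℝ → (Fin n → ℝ))
    (hderiv : ∀ t ∈ Set.Icc (0 : ℝ) T, HasDerivAt x (x' t) t)
    (hincl : ∀ t ∈ Set.Icc (0 : ℝ) T,
      ∃ d ∈ convexHull ℝ (Set.range fun i => ψ i (x t)),
        x' t = f (x t) + g (x t) *ᵥ u (x t) + d)
    (hx0 : 0 ≤ h (x 0)) :
    ∀ t ∈ Set.Icc (0 : ℝ) T, 0 ≤ h (x t) :=
  stmt12_general n m p f g u ψ h hh α hαm hα0 hbar T x x' hderiv hincl hx0
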